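/- arXiv:1602.05610 — 2 statements merged into one kernel-verified Lean document; each statement's English description precedes it below -/
import Mathlib

section
/- (Multivariate step in the proof of Lemma 1.) Let σ > 0, ε > 0, n ≥ 1, let x, w ∈ ℝⁿ and y ∈ ℝ. Then ∫_{ℝⁿ} k_ε(y − ⟨t, x⟩) · k_σ(w − t) dt = k_{√(ε² + σ²‖x‖²)}(y − ⟨w, x⟩), where ⟨·,·⟩ denotes the Euclidean inner product. -/
open MeasureTheory
open scoped RealInnerProductSpace

/-- Isotropic Gaussian kernel on `ℝⁿ`: `k_σ(x) = (√(2π) σ)^{-n} exp(−‖x‖²/(2σ²))`. -/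
noncomputable def gaussKernel (σ : ℝ) {n : ℕ} (x : EuclideanSpace ℝ (Fin n)) : ℝ :=
  ((Real.sqrt (2 * Real.pi) * σ)⁻¹) ^ n * Real.exp (-‖x‖ ^ 2 / (2 * σ ^ 2))

/-- One-dimensional Gaussian kernel. -/
noncomputable def gauss1 (σ x : ℝ) : ℝ :=
  (Real.sqrt (2 * Real.pi) * σ)⁻¹ * Real.exp (-x ^ 2 / (2 * σ ^ 2))

/-!
In one variable, the product `k_ε(y - t x) k_σ(w - t)` factors as the density
`k_τ(y - w x)` with `τ² = ε² + σ² x²` times a Gaussian density in `t`, which integrates to `1`.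
In `n` variables, integrating out one coordinate at a time by Fubini replaces `ε²` by
`ε² + σ² xᵢ²` at each step, until `τ² = ε² + σ² ‖x‖²`.
-/

open Real

lemma integral_fin_succ_eq_integral_prod {α E : Type*} [MeasureSpace α]
    [SigmaFinite (volume : Measure α)] [NormedAddCommGroup E] [NormedSpace ℝ E] {n : ℕ}
    (f : (Fin (n + 1) → α) → E) :
    ∫ t, f t = ∫ p : α × (Fin n → α), f (Fin.cons p.1 p.2) := by
  rw [← (volume_preserving_piFinSuccAbove (fun _ : Fin (n + 1) => α) 0).symm.integral_comp']
  simp [MeasurableEquiv.piFinSuccAbove_symm_apply, Fin.insertNthEquiv, Fin.insertNth_zero']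

section Gauss1

variable {σ ε : ℝ}

lemma gauss1_eq_gaussianPDFReal (hσ : 0 < σ) :
    gauss1 σ = ProbabilityTheory.gaussianPDFReal 0 (σ ^ 2).toNNReal := by
  ext x
  simp only [gauss1, ProbabilityTheory.gaussianPDFReal, coe_toNNReal _ (sq_nonneg σ), sub_zero,
    sqrt_mul (by positivity : (0 : ℝ) ≤ 2 * π), sqrt_sq hσ.le]

lemma gauss1_nonneg (hσ : 0 ≤ σ) (x : ℝ) : 0 ≤ gauss1 σ x := by
  unfold gauss1; positivity

lemma gauss1_le (hσ : 0 ≤ σ) (x : ℝ) : gauss1 σ x ≤ (√(2 * π) * σ)⁻¹ := by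
  refine mul_le_of_le_one_right (by positivity) (exp_le_one_iff.2 ?_)
  rw [neg_div]
  exact neg_nonpos.2 (by positivity)

@[fun_prop]
lemma continuous_gauss1 (σ : ℝ) : Continuous (gauss1 σ) := by
  unfold gauss1; fun_prop

lemma integrable_gauss1 (hσ : 0 < σ) : Integrable (gauss1 σ) := by
  rw [gauss1_eq_gaussianPDFReal hσ]
  exact ProbabilityTheory.integrable_gaussianPDFReal _ _

lemma integral_gauss1 (hσ : 0 < σ) : ∫ x, gauss1 σ x = 1 := by
  rw [gauss1_eq_gaussianPDFReal hσ]
  exact ProbabilityTheory.integral_gaussianPDFReal_eq_one _ (by simpa using hσ.ne')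

/-- Joint density of `(t, y)` = marginal density of `y` × conditional density of `t` given `y`. -/
lemma gauss1_mul_gauss1 (hε : 0 < ε) (hσ : 0 < σ) {x τ : ℝ} (hτ₀ : 0 < τ)
    (hτ : τ ^ 2 = ε ^ 2 + σ ^ 2 * x ^ 2) (y w t : ℝ) :
    gauss1 ε (y - t * x) * gauss1 σ (w - t) =
      gauss1 τ (y - w * x) * gauss1 (ε * σ / τ) (t - (w * ε ^ 2 + y * x * σ ^ 2) / τ ^ 2) := by
  unfold gauss1
  rw [mul_mul_mul_comm, ← exp_add]
  conv_rhs => rw [mul_mul_mul_comm, ← exp_add]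
  congr 1
  · field_simp
  · congr 1
    field_simp
    rw [hτ]
    ring

lemma integral_gauss1_mul_gauss1 (hε : 0 < ε) (hσ : 0 < σ) {x τ : ℝ} (hτ₀ : 0 < τ)
    (hτ : τ ^ 2 = ε ^ 2 + σ ^ 2 * x ^ 2) (y w : ℝ) :
    ∫ t, gauss1 ε (y - t * x) * gauss1 σ (w - t) = gauss1 τ (y - w * x) := by
  simp_rw [gauss1_mul_gauss1 hε hσ hτ₀ hτ, integral_const_mul,
    integral_sub_right_eq_self (gauss1 _), integral_gauss1 (by positivity : 0 < ε * σ / τ),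
    mul_one]

lemma integrable_prod_gauss1 (hσ : 0 < σ) {ι : Type*} [Fintype ι] (w : ι → ℝ) :
    Integrable (fun t : ι → ℝ => ∏ i, gauss1 σ (w i - t i)) :=
  Integrable.fintype_prod fun i => (integrable_gauss1 hσ).comp_sub_left (w i)

lemma integral_gauss1_mul_prod_gauss1 (hσ : 0 < σ) {n : ℕ} (x w : Fin n → ℝ) {τ : ℝ}
    (hτ₀ : 0 < τ) (hε : 0 < ε) (hτ : τ ^ 2 = ε ^ 2 + σ ^ 2 * ∑ i, x i ^ 2) (y : ℝ) :
    ∫ t : Fin n → ℝ, gauss1 ε (y - ∑ i, t i * x i) * ∏ i, gauss1 σ (w i - t i) =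
      gauss1 τ (y - ∑ i, w i * x i) := by
  induction n generalizing ε y with
  | zero =>
    obtain rfl : τ = ε := (sq_eq_sq₀ hτ₀.le hε.le).1 (by simpa using hτ)
    simp [Measure.volume_pi_eq_dirac (0 : Fin 0 → ℝ)]
  | succ n ih =>
    set ε' := √(ε ^ 2 + σ ^ 2 * x 0 ^ 2)
    have hε' : 0 < ε' := by positivity
    have hε'_sq : ε' ^ 2 = ε ^ 2 + σ ^ 2 * x 0 ^ 2 := sq_sqrt (by positivity)
    rw [integral_fin_succ_eq_integral_prod]
    simp only [Fin.sum_univ_succ, Fin.prod_univ_succ, Fin.cons_zero, Fin.cons_succ]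
    have h_first : ∀ t : Fin n → ℝ,
        ∫ a, gauss1 ε (y - (a * x 0 + ∑ j, t j * x j.succ)) *
          (gauss1 σ (w 0 - a) * ∏ j, gauss1 σ (w j.succ - t j)) =
        gauss1 ε' ((y - w 0 * x 0) - ∑ j, t j * x j.succ) * ∏ j, gauss1 σ (w j.succ - t j) := by
      intro t
      simp_rw [← mul_assoc, sub_add_eq_sub_sub_swap]
      rw [integral_mul_const, integral_gauss1_mul_gauss1 hε hσ hε' hε'_sq, sub_right_comm]
    have h_int : Integrable (fun p : ℝ × (Fin n → ℝ) =>
        gauss1 ε (y - (p.1 * x 0 + ∑ j, p.2 j * x j.succ)) *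
          (gauss1 σ (w 0 - p.1) * ∏ j, gauss1 σ (w j.succ - p.2 j))) := by
      refine (((integrable_gauss1 hσ).comp_sub_left (w 0)).mul_prod
        (integrable_prod_gauss1 hσ _)).bdd_mul (c := (√(2 * π) * ε)⁻¹)
        (by fun_prop) (ae_of_all _ fun p => ?_)
      rw [Real.norm_of_nonneg (gauss1_nonneg hε.le _)]
      exact gauss1_le hε.le _
    rw [Measure.volume_eq_prod, integral_prod_symm _ h_int]
    simp_rw [h_first]
    have hτ' : τ ^ 2 = ε' ^ 2 + σ ^ 2 * ∑ j : Fin n, x j.succ ^ 2 := by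
      rw [hτ, hε'_sq, Fin.sum_univ_succ]; ring
    rw [ih (fun j => x j.succ) (fun j => w j.succ) hε' hτ']
    congr 1
    ring

end Gauss1

lemma gaussKernel_eq_prod_gauss1 (σ : ℝ) {n : ℕ} (v : EuclideanSpace ℝ (Fin n)) :
    gaussKernel σ v = ∏ i, gauss1 σ (v i) := by
  simp only [gaussKernel, gauss1, Finset.prod_mul_distrib, Finset.prod_const, Finset.card_univ,
    Fintype.card_fin, ← exp_sum, EuclideanSpace.real_norm_sq_eq, neg_div, Finset.sum_neg_distrib,
    Finset.sum_div]

lemma EuclideanSpace.real_inner_eq_sum {n : ℕ} (t x : EuclideanSpace ℝ (Fin n)) :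
    ⟪t, x⟫ = ∑ i, t i * x i := by
  simp [EuclideanSpace.inner_eq_star_dotProduct, dotProduct, mul_comm]

theorem gaussian_smoothing_linear_argument_kernel_general (σ ε : ℝ) (hσ : 0 < σ) (hε : 0 < ε)
    (n : ℕ) (x w : EuclideanSpace ℝ (Fin n)) (y : ℝ) :
    (∫ t : EuclideanSpace ℝ (Fin n), gauss1 ε (y - ⟪t, x⟫) * gaussKernel σ (w - t)) =
      gauss1 (Real.sqrt (ε ^ 2 + σ ^ 2 * ‖x‖ ^ 2)) (y - ⟪w, x⟫) := by
  simp only [EuclideanSpace.real_inner_eq_sum, gaussKernel_eq_prod_gauss1, PiLp.sub_apply]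
  exact ((EuclideanSpace.volume_preserving_symm_measurableEquiv_toLp (Fin n)).integral_comp'
    (fun t => gauss1 ε (y - ∑ i, t i * x i) * ∏ i, gauss1 σ (w i - t i))).trans
    (integral_gauss1_mul_prod_gauss1 hσ x w (by positivity) hε
      (by rw [sq_sqrt (by positivity), EuclideanSpace.real_norm_sq_eq]) y)

theorem gaussian_smoothing_linear_argument_kernel (σ ε : ℝ) (hσ : 0 < σ) (hε : 0 < ε)
    (n : ℕ) (hn : 1 ≤ n) (x w : EuclideanSpace ℝ (Fin n)) (y : ℝ) :
    (∫ t : EuclideanSpace ℝ (Fin n), gauss1 ε (y - ⟪t, x⟫) * gaussKernel σ (w - t)) =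
      gauss1 (Real.sqrt (ε ^ 2 + σ ^ 2 * ‖x‖ ^ 2)) (y - ⟪w, x⟫) :=
  gaussian_smoothing_linear_argument_kernel_general σ ε hσ hε n x w y
end

section
/- Let σ > 0, n ≥ 1, and let x, w ∈ ℝⁿ with x ≠ 0. Then ∫_{ℝⁿ} max(0, ⟨t, x⟩) · k_σ(w − t) dt = (σ‖x‖/√(2π)) exp(−⟨w, x⟩²/(2σ²‖x‖²)) + (1/2) ⟨w, x⟩ (1 + erf( ⟨w, x⟩ / (√2 σ ‖x‖) )), where ⟨·,·⟩ denotes the Euclidean inner product. -/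
open MeasureTheory
open scoped RealInnerProductSpace

/-- The error function `erf(x) = (2/√π) ∫₀ˣ e^{−t²} dt`. -/
noncomputable def erf (x : ℝ) : ℝ :=
  (2 / Real.sqrt Real.pi) * ∫ t in (0 : ℝ)..x, Real.exp (-t ^ 2)

/-!
Write `⟪t, x⟫ = ‖x‖ ⟪t, u⟫` with `u = x / ‖x‖`. In an orthonormal basis containing `u`,
the Gaussian kernel is a product of one-dimensional Gaussian densities, so all coordinates but
the one along `u` integrate to `1` and the integral becomes `‖x‖ 𝔼[max 0 S]` with
`S ~ N(a, σ²)`, `a = ⟪w, u⟫`. On `s > 0` one writes `s = (s - a) + a`: the first part has the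
elementary antiderivative `-σ² exp (-(s - a)² / (2σ²))`, the second is a Gaussian tail, i.e. an
`erf` term.
-/

open Real Set Filter Topology ProbabilityTheory

lemma hasDerivAt_erf (x : ℝ) : HasDerivAt erf (2 / √π * exp (-x ^ 2)) x := by
  have hc : Continuous fun t : ℝ => exp (-t ^ 2) := by fun_prop
  exact (intervalIntegral.integral_hasDerivAt_right (hc.intervalIntegrable _ _)
    hc.aestronglyMeasurable.stronglyMeasurableAtFilter hc.continuousAt).const_mul _

lemma tendsto_erf_atTop : Tendsto erf atTop (𝓝 1) := by
  have hint : IntegrableOn (fun t : ℝ => exp (-t ^ 2)) (Ioi 0) := by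
    simpa using (integrable_exp_neg_mul_sq one_pos).integrableOn
  have hval : ∫ t in Ioi 0, exp (-t ^ 2) = √π / 2 := by simpa using integral_gaussian_Ioi 1
  have hlim := (intervalIntegral_tendsto_integral_Ioi 0 hint tendsto_id).const_mul (2 / √π)
  have hπ : √π ≠ 0 := by positivity
  rw [hval, show 2 / √π * (√π / 2) = 1 by field_simp] at hlim
  exact hlim

lemma erf_neg (x : ℝ) : erf (-x) = -erf x := by
  have h := intervalIntegral.integral_comp_neg (a := 0) (b := x) fun t => exp (-t ^ 2)
  simp only [neg_sq, neg_zero] at h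
  rw [erf, erf, intervalIntegral.integral_symm, ← h, mul_neg]

section GaussianTail

variable {σ : ℝ}

lemma integrable_exp_neg_sub_sq_div (a : ℝ) (hσ : σ ≠ 0) :
    Integrable fun t => exp (-(t - a) ^ 2 / (2 * σ ^ 2)) := by
  have hb : (0 : ℝ) < (2 * σ ^ 2)⁻¹ := by positivity
  convert (integrable_exp_neg_mul_sq hb).comp_sub_right a using 2 with t
  ring_nf

lemma integrable_sub_mul_exp_neg_sub_sq_div (a : ℝ) (hσ : σ ≠ 0) :
    Integrable fun t => (t - a) * exp (-(t - a) ^ 2 / (2 * σ ^ 2)) := by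
  have hb : (0 : ℝ) < (2 * σ ^ 2)⁻¹ := by positivity
  convert (integrable_mul_exp_neg_mul_sq hb).comp_sub_right a using 2 with t
  ring_nf

lemma tendsto_exp_neg_sub_sq_div_atTop (a : ℝ) (hσ : σ ≠ 0) :
    Tendsto (fun t => exp (-(t - a) ^ 2 / (2 * σ ^ 2))) atTop (𝓝 0) := by
  refine tendsto_exp_atBot.comp (Tendsto.atBot_div_const (by positivity) ?_)
  exact tendsto_neg_atTop_atBot.comp
    ((tendsto_pow_atTop two_ne_zero).comp (tendsto_atTop_add_const_right _ (-a) tendsto_id))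

lemma integral_Ioi_sub_mul_exp_neg_sub_sq_div (a : ℝ) (hσ : σ ≠ 0) :
    ∫ t in Ioi 0, (t - a) * exp (-(t - a) ^ 2 / (2 * σ ^ 2))
      = σ ^ 2 * exp (-a ^ 2 / (2 * σ ^ 2)) := by
  have hderiv : ∀ t ∈ Ici (0 : ℝ), HasDerivAt (fun t => -σ ^ 2 * exp (-(t - a) ^ 2 / (2 * σ ^ 2)))
      ((t - a) * exp (-(t - a) ^ 2 / (2 * σ ^ 2))) t := by
    intro t _
    have h := ((((hasDerivAt_id t).sub_const a).pow 2).neg.div_const (2 * σ ^ 2)).exp.const_mul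
      (-σ ^ 2)
    refine h.congr_deriv ?_
    simp only [id, Pi.neg_apply, Pi.pow_apply]
    field_simp
    norm_num
    ring
  have hlim := (tendsto_exp_neg_sub_sq_div_atTop a hσ).const_mul (-σ ^ 2)
  rw [mul_zero] at hlim
  rw [integral_Ioi_of_hasDerivAt_of_tendsto' hderiv
    (integrable_sub_mul_exp_neg_sub_sq_div a hσ).integrableOn hlim, zero_sub, zero_sub, neg_sq]
  ring

lemma integral_Ioi_exp_neg_sub_sq_div (a : ℝ) (hσ : 0 < σ) :
    ∫ t in Ioi 0, exp (-(t - a) ^ 2 / (2 * σ ^ 2))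
      = √(2 * π) * σ / 2 * (1 + erf (a / (√2 * σ))) := by
  have hs : √2 * σ ≠ 0 := by positivity
  have hπ : √π ≠ 0 := by positivity
  have hsqrt : √(2 * π) = √2 * √π := Real.sqrt_mul (by norm_num) _
  have hderiv : ∀ t ∈ Ici (0 : ℝ), HasDerivAt (fun t => √(2 * π) * σ / 2 * erf ((t - a) / (√2 * σ)))
      (exp (-(t - a) ^ 2 / (2 * σ ^ 2))) t := by
    intro t _
    have h := ((hasDerivAt_erf _).comp t
      (((hasDerivAt_id t).sub_const a).div_const (√2 * σ))).const_mul (√(2 * π) * σ / 2)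
    refine h.congr_deriv ?_
    simp only [id]
    rw [hsqrt, div_pow, mul_pow, sq_sqrt zero_le_two]
    field_simp
  have hlim : Tendsto (fun t => √(2 * π) * σ / 2 * erf ((t - a) / (√2 * σ))) atTop
      (𝓝 (√(2 * π) * σ / 2 * 1)) :=
    (tendsto_erf_atTop.comp (Tendsto.atTop_div_const (by positivity)
      (tendsto_atTop_add_const_right _ (-a) tendsto_id))).const_mul _
  rw [integral_Ioi_of_hasDerivAt_of_tendsto' hderiv
    (integrable_exp_neg_sub_sq_div a hσ.ne').integrableOn hlim, zero_sub, neg_div, erf_neg]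
  ring

end GaussianTail

lemma gaussianPDFReal_sq {σ : ℝ} (hσ : 0 ≤ σ) (a s : ℝ) :
    gaussianPDFReal a (σ ^ 2).toNNReal s = (√(2 * π) * σ)⁻¹ * exp (-(s - a) ^ 2 / (2 * σ ^ 2)) := by
  rw [gaussianPDFReal_def, Real.coe_toNNReal _ (sq_nonneg σ), sqrt_mul (by positivity), sqrt_sq hσ]

lemma integral_max_zero_mul_gaussianPDFReal {σ : ℝ} (hσ : 0 < σ) (a : ℝ) :
    ∫ s, max 0 s * gaussianPDFReal a (σ ^ 2).toNNReal s
      = σ / √(2 * π) * exp (-a ^ 2 / (2 * σ ^ 2)) + 1 / 2 * a * (1 + erf (a / (√2 * σ))) := by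
  have hσ' := hσ.ne'
  set c := (√(2 * π) * σ)⁻¹ with hc
  have hsplit : (fun s => max 0 s * gaussianPDFReal a (σ ^ 2).toNNReal s)
      = (Ioi 0).indicator fun s => c * ((s - a) * exp (-(s - a) ^ 2 / (2 * σ ^ 2)))
          + c * a * exp (-(s - a) ^ 2 / (2 * σ ^ 2)) := by
    ext s
    rw [gaussianPDFReal_sq hσ.le]
    by_cases hs : s ∈ Ioi 0
    · rw [indicator_of_mem hs, max_eq_right (le_of_lt hs)]
      ring
    · rw [indicator_of_notMem hs, max_eq_left (not_lt.mp hs), zero_mul]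
  rw [hsplit, integral_indicator measurableSet_Ioi,
    integral_add ((integrable_sub_mul_exp_neg_sub_sq_div a hσ').integrableOn.const_mul c)
      ((integrable_exp_neg_sub_sq_div a hσ').integrableOn.const_mul (c * a)),
    integral_const_mul, integral_const_mul, integral_Ioi_sub_mul_exp_neg_sub_sq_div a hσ',
    integral_Ioi_exp_neg_sub_sq_div a hσ]
  have : √(2 * π) ≠ 0 := by positivity
  rw [hc]
  field_simp

section Euclidean

variable {n : ℕ}

lemma gaussKernel_sub_eq_prod_gaussianPDFReal {σ : ℝ} (hσ : 0 ≤ σ)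
    (a y : EuclideanSpace ℝ (Fin n)) :
    gaussKernel σ (a - y) = ∏ i, gaussianPDFReal (a i) (σ ^ 2).toNNReal (y i) := by
  simp only [gaussianPDFReal_sq hσ, Finset.prod_mul_distrib, Finset.prod_const, Finset.card_univ,
    Fintype.card_fin, ← exp_sum, gaussKernel, EuclideanSpace.real_norm_sq_eq, PiLp.sub_apply,
    ← Finset.sum_div, ← Finset.sum_neg_distrib, inv_pow]
  congr 4 with i
  ring

lemma integral_comp_apply_mul_gaussKernel {σ : ℝ} (hσ : 0 < σ) (a : EuclideanSpace ℝ (Fin n))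
    (i : Fin n) (g : ℝ → ℝ) :
    ∫ y, g (y i) * gaussKernel σ (a - y) = ∫ s, g s * gaussianPDFReal (a i) (σ ^ 2).toNNReal s := by
  set p : Fin n → ℝ → ℝ := fun j => gaussianPDFReal (a j) (σ ^ 2).toNNReal
  set F : Fin n → ℝ → ℝ := fun j s => (if j = i then g s else 1) * p j s
  calc ∫ y, g (y i) * gaussKernel σ (a - y)
      = ∫ z : Fin n → ℝ, ∏ j, F j (z j) := by
        rw [← (EuclideanSpace.volume_preserving_symm_measurableEquiv_toLp (Fin n)).symm
          |>.integral_comp']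
        congr 1 with z
        simp only [F, Finset.prod_mul_distrib, Finset.prod_ite_eq', Finset.mem_univ, if_true,
          gaussKernel_sub_eq_prod_gaussianPDFReal hσ.le]
        rfl
    _ = ∏ j, ∫ s, F j s := integral_fintype_prod_volume_eq_prod F
    _ = ∫ s, g s * p i s := by
        have hv : (σ ^ 2).toNNReal ≠ 0 := by simp [hσ.ne']
        rw [Fintype.prod_eq_single i fun j hj => by
          simp only [F, if_neg hj, one_mul, p, integral_gaussianPDFReal_eq_one _ hv]]
        simp only [F, ↓reduceIte]

lemma integral_comp_inner_mul_gaussKernel {σ : ℝ} (hσ : 0 < σ) {u : EuclideanSpace ℝ (Fin n)}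
    (hu : ‖u‖ = 1) (w : EuclideanSpace ℝ (Fin n)) (g : ℝ → ℝ) :
    ∫ t, g ⟪t, u⟫ * gaussKernel σ (w - t)
      = ∫ s, g s * gaussianPDFReal ⟪w, u⟫ (σ ^ 2).toNNReal s := by
  obtain ⟨i⟩ : Nonempty (Fin n) := by
    by_contra h
    rw [not_nonempty_iff] at h
    simp [Subsingleton.elim u 0] at hu
  have hone : Orthonormal ℝ (({i} : Set (Fin n)).domRestrict fun _ => u) :=
    ⟨fun _ => hu, fun j k hjk => (hjk (Subsingleton.elim j k)).elim⟩
  obtain ⟨b, hb⟩ := hone.exists_orthonormalBasis_extension_of_card_eq (by simp)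
  have hbi : b i = u := hb i rfl
  have hinner (y : EuclideanSpace ℝ (Fin n)) : ⟪b.repr.symm y, u⟫ = y i := by
    rw [← hbi, real_inner_comm, ← b.repr_apply_apply, LinearIsometryEquiv.apply_symm_apply]
  have hkernel (y : EuclideanSpace ℝ (Fin n)) :
      gaussKernel σ (w - b.repr.symm y) = gaussKernel σ (b.repr w - y) := by
    rw [gaussKernel, gaussKernel, ← b.repr.norm_map, map_sub, LinearIsometryEquiv.apply_symm_apply]
  rw [← b.measurePreserving_repr_symm.integral_comp b.repr.symm.toHomeomorph.measurableEmbedding]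
  simp only [hinner, hkernel]
  rw [integral_comp_apply_mul_gaussKernel hσ, b.repr_apply_apply, hbi, real_inner_comm]

end Euclidean

theorem gaussian_smoothing_relu_linear_general (σ : ℝ) (hσ : 0 < σ) (n : ℕ)
    (x w : EuclideanSpace ℝ (Fin n)) (hx : x ≠ 0) :
    (∫ t : EuclideanSpace ℝ (Fin n), max 0 ⟪t, x⟫ * gaussKernel σ (w - t)) =
      (σ * ‖x‖ / Real.sqrt (2 * Real.pi)) *
          Real.exp (-⟪w, x⟫ ^ 2 / (2 * σ ^ 2 * ‖x‖ ^ 2)) +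
        (1 / 2) * ⟪w, x⟫ * (1 + erf (⟪w, x⟫ / (Real.sqrt 2 * σ * ‖x‖))) := by
  have hx' : ‖x‖ ≠ 0 := norm_ne_zero_iff.mpr hx
  have hu : ‖‖x‖⁻¹ • x‖ = 1 := by rw [norm_smul, norm_inv, norm_norm, inv_mul_cancel₀ hx']
  have hrelu (t : EuclideanSpace ℝ (Fin n)) : max 0 ⟪t, x⟫ = ‖x‖ * max 0 ⟪t, ‖x‖⁻¹ • x⟫ := by
    rw [real_inner_smul_right, mul_max_of_nonneg _ _ (norm_nonneg x), mul_zero,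
      mul_inv_cancel_left₀ hx']
  simp only [hrelu, mul_assoc]
  rw [integral_const_mul, integral_comp_inner_mul_gaussKernel hσ hu w fun s => max 0 s,
    integral_max_zero_mul_gaussianPDFReal hσ, real_inner_smul_right]
  have : √(2 * π) ≠ 0 := by positivity
  field_simp

theorem gaussian_smoothing_relu_linear (σ : ℝ) (hσ : 0 < σ) (n : ℕ) (hn : 1 ≤ n)
    (x w : EuclideanSpace ℝ (Fin n)) (hx : x ≠ 0) :
    (∫ t : EuclideanSpace ℝ (Fin n), max 0 ⟪t, x⟫ * gaussKernel σ (w - t)) =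
      (σ * ‖x‖ / Real.sqrt (2 * Real.pi)) *
          Real.exp (-⟪w, x⟫ ^ 2 / (2 * σ ^ 2 * ‖x‖ ^ 2)) +
        (1 / 2) * ⟪w, x⟫ * (1 + erf (⟪w, x⟫ / (Real.sqrt 2 * σ * ‖x‖))) :=
  gaussian_smoothing_relu_linear_general σ hσ n x w hx
end
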